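/- The Gibbs association weights are the unique minimizer of the free energy: if q is a feasible association with F(q) = F(g), then q = g, where g i j = exp(-β·d i j)/∑_k exp(-β·d i k). -/
import Mathlib


open Finset Real

/-- The free energy of an association `q`. -/
noncomputable def freeEnergy {N K : ℕ} (p : Fin N → ℝ) (d : Fin N → Fin K → ℝ) (β : ℝ)
    (q : Fin N → Fin K → ℝ) : ℝ :=
  ∑ i, p i * ∑ j, q i j * d i j + (1 / β) * ∑ i, p i * ∑ j, q i j * Real.log (q i j)

/-- The Gibbs association weights `g i j = exp(-β d i j) / ∑ₖ exp(-β d i k)`. -/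
noncomputable def gibbs {N K : ℕ} (d : Fin N → Fin K → ℝ) (β : ℝ) :
    Fin N → Fin K → ℝ :=
  fun i j => Real.exp (-β * d i j) / ∑ k, Real.exp (-β * d i k)

lemma term_bound_lt {w g : ℝ} (hw : 0 ≤ w) (hg : 0 < g) (hne : w ≠ g) :
    w - g < w * (Real.log w - Real.log g) := by
  rcases hw.eq_or_lt with h | h
  · rw [← h, zero_mul]; linarith
  · have h1 : Real.log (g / w) < g / w - 1 := by
      refine Real.log_lt_sub_one_of_pos (div_pos hg h) ?_
      intro hc
      apply hne
      field_simp at hc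
      linarith
    have h2 : Real.log (g / w) = Real.log g - Real.log w := Real.log_div hg.ne' h.ne'
    have h3 : w * (g / w) = g := by field_simp
    nlinarith

lemma term_bound_le {w g : ℝ} (hw : 0 ≤ w) (hg : 0 < g) :
    w - g ≤ w * (Real.log w - Real.log g) := by
  rcases eq_or_ne w g with rfl | hne
  · simp
  · exact (term_bound_lt hw hg hne).le

/-- Gibbs' inequality, strict version. -/
lemma gibbs_ineq {K : ℕ} (w g : Fin K → ℝ) (hw0 : ∀ j, 0 ≤ w j) (hgp : ∀ j, 0 < g j)
    (hw1 : ∑ j, w j = 1) (hg1 : ∑ j, g j = 1) (hne : w ≠ g) :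
    0 < ∑ j, w j * (Real.log (w j) - Real.log (g j)) := by
  obtain ⟨j0, hj0⟩ := Function.ne_iff.mp hne
  have hlt : ∑ j, (w j - g j) < ∑ j, w j * (Real.log (w j) - Real.log (g j)) :=
    Finset.sum_lt_sum (fun j _ => term_bound_le (hw0 j) (hgp j))
      ⟨j0, Finset.mem_univ _, term_bound_lt (hw0 j0) (hgp j0) hj0⟩
  have hz : ∑ j, (w j - g j) = 0 := by
    rw [Finset.sum_sub_distrib, hw1, hg1]; ring
  linarith

/-- The Gibbs weights are the unique minimizer of the free energy: a feasible
association achieving the Gibbs free energy must equal the Gibbs weights. -/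
theorem gibbs_unique_minimizer
    {N K : ℕ} (hN : 1 ≤ N) (hK : 1 ≤ K)
    (p : Fin N → ℝ) (hp : ∀ i, 0 < p i) (hpsum : ∑ i, p i = 1)
    (d : Fin N → Fin K → ℝ) (β : ℝ) (hβ : 0 < β)
    (q : Fin N → Fin K → ℝ)
    (hq0 : ∀ i j, 0 ≤ q i j) (hq1 : ∀ i, ∑ j, q i j = 1)
    (heq : freeEnergy p d β q = freeEnergy p d β (gibbs d β)) :
    q = gibbs d β := by
  have : Nonempty (Fin K) := ⟨⟨0, hK⟩⟩
  set Z : Fin N → ℝ := fun i => ∑ k, Real.exp (-β * d i k) with hZdef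
  have hZ : ∀ i, 0 < Z i := fun i =>
    Finset.sum_pos (fun k _ => Real.exp_pos _) Finset.univ_nonempty
  have hgp : ∀ i j, 0 < gibbs d β i j := fun i j => div_pos (Real.exp_pos _) (hZ i)
  have hg1 : ∀ i, ∑ j, gibbs d β i j = 1 := by
    intro i
    simp only [gibbs]
    rw [← Finset.sum_div, div_self (hZ i).ne']
  have hlogg : ∀ i j, Real.log (gibbs d β i j) = -β * d i j - Real.log (Z i) := by
    intro i j
    rw [gibbs, Real.log_div (Real.exp_pos _).ne' (hZ i).ne', Real.log_exp]
  -- per-row identity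
  have key : ∀ (v : Fin N → Fin K → ℝ), (∀ i, ∑ j, v i j = 1) →
      ∀ i, ∑ j, v i j * d i j + (1 / β) * ∑ j, v i j * Real.log (v i j)
        = (1 / β) * (∑ j, v i j * (Real.log (v i j) - Real.log (gibbs d β i j)))
          - (1 / β) * Real.log (Z i) := by
    intro v hv1 i
    have hterm : ∀ j, v i j * (Real.log (v i j) - Real.log (gibbs d β i j))
        = v i j * Real.log (v i j) + β * (v i j * d i j) + Real.log (Z i) * v i j := by
      intro j; rw [hlogg]; ring
    rw [Finset.sum_congr rfl (fun j _ => hterm j), Finset.sum_add_distrib,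
      Finset.sum_add_distrib, ← Finset.mul_sum, ← Finset.mul_sum, hv1 i]
    field_simp
    ring
  -- rewrite free energy as a sum over rows
  have hFE : ∀ (v : Fin N → Fin K → ℝ), freeEnergy p d β v
      = ∑ i, p i * (∑ j, v i j * d i j + (1 / β) * ∑ j, v i j * Real.log (v i j)) := by
    intro v
    rw [freeEnergy, Finset.mul_sum, ← Finset.sum_add_distrib]
    exact Finset.sum_congr rfl fun i _ => by ring
  set KL : Fin N → ℝ :=
    fun i => ∑ j, q i j * (Real.log (q i j) - Real.log (gibbs d β i j)) with hKL
  have hKLg : ∀ i, ∑ j, gibbs d β i j * (Real.log (gibbs d β i j)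
      - Real.log (gibbs d β i j)) = 0 := by
    intro i; simp
  have hsum : ∑ i, p i * KL i = 0 := by
    have h1 : freeEnergy p d β q
        = ∑ i, p i * ((1 / β) * KL i - (1 / β) * Real.log (Z i)) := by
      rw [hFE q]
      exact Finset.sum_congr rfl fun i _ => by rw [key q hq1 i]
    have h2 : freeEnergy p d β (gibbs d β)
        = ∑ i, p i * (0 - (1 / β) * Real.log (Z i)) := by
      rw [hFE (gibbs d β)]
      refine Finset.sum_congr rfl fun i _ => ?_
      rw [key (gibbs d β) hg1 i, hKLg i, mul_zero]
    rw [h1, h2] at heq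
    have h3 : ∑ i, p i * ((1 / β) * KL i - (1 / β) * Real.log (Z i))
        - ∑ i, p i * (0 - (1 / β) * Real.log (Z i))
        = (1 / β) * ∑ i, p i * KL i := by
      rw [← Finset.sum_sub_distrib, Finset.mul_sum]
      exact Finset.sum_congr rfl fun i _ => by ring
    have h4 : (1 / β) * ∑ i, p i * KL i = 0 := by rw [← h3, heq]; ring
    have hβ' : (1 / β) ≠ 0 := by positivity
    exact (mul_eq_zero.mp h4).resolve_left hβ'
  -- each KL i must vanish, hence each row equals the Gibbs row
  funext i
  by_contra hne
  have hKLpos : 0 < KL i :=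
    gibbs_ineq (q i) (gibbs d β i) (hq0 i) (hgp i) (hq1 i) (hg1 i) hne
  have hnonneg : ∀ i' ∈ Finset.univ, (0 : ℝ) ≤ p i' * KL i' := by
    intro i' _
    have : 0 ≤ KL i' := by
      rcases eq_or_ne (q i') (gibbs d β i') with h | h
      · rw [hKL]
        simp only [h]
        simp
      · exact (gibbs_ineq (q i') (gibbs d β i') (hq0 i') (hgp i') (hq1 i') (hg1 i') h).le
    exact mul_nonneg (hp i').le this
  have := (Finset.sum_eq_zero_iff_of_nonneg hnonneg).mp hsum i (Finset.mem_univ i)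
  have : KL i = 0 := by
    rcases mul_eq_zero.mp this with h | h
    · exact absurd h (hp i).ne'
    · exact h
  linarith
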